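/- arXiv:2407.11364 — 5 statements merged into one kernel-verified Lean document; each statement's English description precedes it below -/
import Mathlib

section
/- Let G be a simple graph on a finite vertex set V and let I* ⊆ V be an independent set of G with |I*| ≥ 50 · |V ∖ I*|. Let U ⊆ V be a 2-approximate vertex cover of G, i.e., U is a vertex cover of G and |U| ≤ 2 · |W| for every vertex cover W of G. Then V ∖ U is an independent set of G and |V ∖ U| ≥ (49/50) · |I*|. -/
open Finset
open scoped Classical

/-! Because `I*` is independent, `V ∖ I*` is a vertex cover, so the approximation guarantee gives
`|U| ≤ 2 |V ∖ I*|` and hence `|V ∖ U| ≥ |I*| - |V ∖ I*| ≥ (49/50) |I*|`. Independence of `V ∖ U`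
is the general fact that complements of vertex covers are independent. -/

namespace SimpleGraph

variable {V : Type*} (G : SimpleGraph V)

theorem isIndepSet_coe_iff {s : Finset V} :
    G.IsIndepSet (s : Set V) ↔ ∀ u ∈ s, ∀ v ∈ s, ¬ G.Adj u v :=
  ⟨fun h _ hu _ hv huv ↦ h hu hv huv.ne huv, fun h _ hu _ hv _ ↦ h _ hu _ hv⟩

variable [Fintype V] [DecidableEq V]

theorem isIndepSet_univ_sdiff_iff_isVertexCover {s : Finset V} :
    G.IsIndepSet (↑(univ \ s) : Set V) ↔ G.IsVertexCover (s : Set V) := by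
  rw [coe_sdiff, coe_univ, ← Set.compl_eq_univ_sdiff, isIndepSet_compl_iff_isVertexCover]

end SimpleGraph

theorem Finset.card_le_card_univ_sdiff_add_of_card_le_two_mul {α : Type*} [Fintype α]
    [DecidableEq α] {s t : Finset α} (h : #t ≤ 2 * #(univ \ s)) :
    #s ≤ #(univ \ t) + #(univ \ s) := by
  have hs := card_le_univ s
  have ht := card_le_univ t
  rw [card_univ_sdiff, card_univ_sdiff] at *
  omega

/-- If `Istar` is an independent set of `G` with
`|Istar| ≥ 50 * |V \ Istar|` and `U` is a 2-approximate vertex cover of `G`, then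
`V \ U` is an independent set with `|V \ U| ≥ (49/50) * |Istar|`. -/
theorem complement_of_two_approx_vertex_cover
    (V : Type*) [Fintype V] [DecidableEq V] (G : SimpleGraph V)
    (Istar U : Finset V)
    (hIstar : ∀ u ∈ Istar, ∀ v ∈ Istar, ¬ G.Adj u v)
    (hsize : 50 * (Finset.univ \ Istar).card ≤ Istar.card)
    (hUcover : ∀ u v : V, G.Adj u v → u ∈ U ∨ v ∈ U)
    (hUapprox : ∀ W : Finset V, (∀ u v : V, G.Adj u v → u ∈ W ∨ v ∈ W) →
      U.card ≤ 2 * W.card) :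
    (∀ u ∈ Finset.univ \ U, ∀ v ∈ Finset.univ \ U, ¬ G.Adj u v) ∧
      (49 / 50 : ℝ) * Istar.card ≤ ((Finset.univ \ U).card : ℝ) := by
  refine ⟨(G.isIndepSet_coe_iff).1
    ((G.isIndepSet_univ_sdiff_iff_isVertexCover).2 fun u v ↦ hUcover u v), ?_⟩
  have hIcover : G.IsVertexCover (↑(univ \ Istar) : Set V) := by
    rw [← G.isIndepSet_univ_sdiff_iff_isVertexCover, Finset.sdiff_sdiff_eq_self (subset_univ _)]
    exact (G.isIndepSet_coe_iff).2 hIstar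
  have hcard := card_le_card_univ_sdiff_add_of_card_le_two_mul
    (hUapprox _ fun u v huv ↦ hIcover huv)
  have h49 : 49 * #Istar ≤ 50 * #(univ \ U) := by omega
  rw [div_mul_eq_mul_div, div_le_iff₀ (by norm_num), mul_comm _ (50 : ℝ)]
  exact_mod_cast h49
end

section
/- Let n ≥ 2 be a natural number, let ε be a real number with 0 < ε ≤ 1/4, and let d, k be natural numbers with 1 ≤ k ≤ d and k ≥ (3/ε) · √(d · ln n). Let X_1, …, X_k be i.i.d. Bernoulli(1/2 + ε) random variables, let Y_1, …, Y_{d−k} be i.i.d. Bernoulli(1/2 − ε) random variables, with the whole family of d variables mutually independent, and set S = Σ_{i=1}^k X_i + Σ_{j=1}^{d−k} Y_j. Then Pr[ S ≤ (1/2 − ε)·d + 6·(1/2 − ε)·√(d · ln n) ] ≤ n^{−3}. -/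
/-!
The `k` variables of mean `1/2 + ε` lift the expected sum to `(1/2 - ε) d + 2 ε k`, which exceeds
the threshold by at least `3 √(d ln n)` because `2 ε k ≥ 6 √(d ln n)`. Hoeffding's inequality for
`[0, 1]`-valued variables bounds the probability of falling that far below the mean by
`exp (-2 · 9 d ln n / d) = n⁻¹⁸ ≤ n⁻³`.
-/

open MeasureTheory ProbabilityTheory Real
open scoped ENNReal

theorem Fin.sum_ite_val_lt {M : Type*} [AddCommMonoid M] {d k : ℕ} (hkd : k ≤ d) (x y : M) :
    ∑ i : Fin d, (if (i : ℕ) < k then x else y) = k • x + (d - k) • y := by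
  rw [Finset.sum_ite, Finset.sum_const, Finset.sum_const, Fin.card_filter_val_lt,
    min_eq_right hkd, Finset.filter_not, Finset.card_sdiff_of_subset (Finset.filter_subset _ _),
    Fin.card_filter_val_lt, min_eq_right hkd, Finset.card_univ, Fintype.card_fin]

theorem exp_neg_le_inv_pow {n x : ℝ} (hn : 0 < n) (m : ℕ) (hx : m * log n ≤ x) :
    exp (-x) ≤ (n ^ m)⁻¹ := by
  rw [exp_neg]
  refine inv_anti₀ (by positivity) ?_
  calc n ^ m = exp (m * log n) := by rw [← log_pow, exp_log (by positivity)]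
    _ ≤ exp x := exp_le_exp.mpr hx

theorem integral_eq_of_eq_zero_or_one {Ω : Type*} [MeasurableSpace Ω] {μ : Measure Ω}
    {Z : Ω → ℝ} (hZ : Measurable Z) (h01 : ∀ ω, Z ω = 0 ∨ Z ω = 1) {p : ℝ} (hp : 0 ≤ p)
    (hμ : μ {ω | Z ω = 1} = ENNReal.ofReal p) :
    μ[Z] = p := by
  have hZ_eq : Z = {ω | Z ω = 1}.indicator 1 := by
    funext ω
    rcases h01 ω with h | h <;> simp [Set.indicator, h]
  have hs : MeasurableSet {ω | Z ω = 1} := hZ (measurableSet_singleton 1)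
  conv_lhs => rw [hZ_eq]
  rw [integral_indicator_one hs, measureReal_def, hμ, ENNReal.toReal_ofReal hp]

theorem measureReal_sum_le_sum_integral_sub_le {Ω ι : Type*} [MeasurableSpace Ω]
    {μ : Measure Ω} [Fintype ι] {Z : ι → Ω → ℝ} (hind : iIndepFun Z μ)
    (hmeas : ∀ i, Measurable (Z i)) {a b : ℝ} (hZ : ∀ i ω, Z i ω ∈ Set.Icc a b)
    {t : ℝ} (ht : 0 ≤ t) :
    μ.real {ω | ∑ i, Z i ω ≤ ∑ i, μ[Z i] - t}
      ≤ exp (-2 * t ^ 2 / (Fintype.card ι * (b - a) ^ 2)) := by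
  have := hind.isProbabilityMeasure
  have hsub (i : ι) : HasSubgaussianMGF (fun ω ↦ μ[Z i] - Z i ω) ((‖b - a‖₊ / 2) ^ 2) μ :=
    (hasSubgaussianMGF_of_mem_Icc (hmeas i).aemeasurable (ae_of_all _ (hZ i))).neg.congr
      (ae_of_all _ fun ω ↦ by simp)
  have hind_centered := hind.comp (fun i y ↦ μ[Z i] - y) fun i ↦ by fun_prop
  convert HasSubgaussianMGF.measure_sum_ge_le_of_iIndepFun hind_centered (fun i _ ↦ hsub i) ht using 2
  · ext ω
    simp only [Set.mem_ofPred_eq, Function.comp_apply, Finset.sum_sub_distrib]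
    exact le_sub_comm
  · push_cast
    rw [Finset.sum_const, Finset.card_univ, Real.norm_eq_abs, nsmul_eq_mul, div_pow, sq_abs,
      show (2 : ℝ) * (Fintype.card ι * ((b - a) ^ 2 / 2 ^ 2)) = Fintype.card ι * (b - a) ^ 2 / 2 by
        ring, div_div_eq_mul_div]
    ring

/-- For `n ≥ 2`, `0 < ε ≤ 1/4`, `1 ≤ k ≤ d` with
`k ≥ (3/ε)·√(d · ln n)`, and a mutually independent family of `d` Bernoulli random
variables of which the first `k` have mean `1/2 + ε` and the remaining `d - k` have
mean `1/2 - ε`, the probability that their sum is at most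
`(1/2 - ε)·d + 6·(1/2 - ε)·√(d · ln n)` is at most `n⁻³`. -/
theorem bernoulli_sum_lower_tail_nonmis_vertex
    (Ω : Type*) [MeasurableSpace Ω] (μ : Measure Ω) [IsProbabilityMeasure μ]
    (n : ℕ) (hn : 2 ≤ n) (ε : ℝ) (hε0 : 0 < ε) (hε : ε ≤ 1 / 4)
    (d k : ℕ) (hk1 : 1 ≤ k) (hkd : k ≤ d)
    (hk : (3 / ε) * Real.sqrt (d * Real.log n) ≤ (k : ℝ))
    (Z : Fin d → Ω → ℝ)
    (hmeas : ∀ i, Measurable (Z i))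
    (h01 : ∀ i ω, Z i ω = 0 ∨ Z i ω = 1)
    (hBerHigh : ∀ i : Fin d, (i : ℕ) < k →
      μ {ω | Z i ω = 1} = ENNReal.ofReal (1 / 2 + ε))
    (hBerLow : ∀ i : Fin d, k ≤ (i : ℕ) →
      μ {ω | Z i ω = 1} = ENNReal.ofReal (1 / 2 - ε))
    (hind : iIndepFun Z μ) :
    μ {ω | ∑ i, Z i ω
        ≤ (1 / 2 - ε) * d + 6 * (1 / 2 - ε) * Real.sqrt (d * Real.log n)}
      ≤ ((n : ℝ≥0∞) ^ 3)⁻¹ := by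
  have hd : (0 : ℝ) < d := by exact_mod_cast hk1.trans hkd
  have hlog : 0 < log n := log_pos (by exact_mod_cast hn)
  set L := √(d * log n)
  have hL0 : 0 ≤ L := sqrt_nonneg _
  have hL2 : L ^ 2 = d * log n := sq_sqrt (by positivity)
  have hmean : ∑ i, μ[Z i] = (1 / 2 - ε) * d + 2 * ε * k := by
    calc ∑ i, μ[Z i] = ∑ i : Fin d, if (i : ℕ) < k then 1 / 2 + ε else 1 / 2 - ε := by
          refine Finset.sum_congr rfl fun i _ ↦ ?_
          split_ifs with hi
          · exact integral_eq_of_eq_zero_or_one (hmeas i) (h01 i) (by linarith) (hBerHigh i hi)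
          · exact integral_eq_of_eq_zero_or_one (hmeas i) (h01 i) (by linarith)
              (hBerLow i (not_lt.mp hi))
      _ = (1 / 2 - ε) * d + 2 * ε * k := by
          rw [Fin.sum_ite_val_lt hkd, nsmul_eq_mul, nsmul_eq_mul, Nat.cast_sub hkd]
          ring
  set t := 2 * ε * k - 6 * (1 / 2 - ε) * L with ht
  have hLt : 3 * L ≤ t := by
    have hkL : 6 * L ≤ 2 * ε * k := by
      calc 6 * L = 2 * ε * (3 / ε * L) := by field_simp; ring
        _ ≤ 2 * ε * k := by gcongr
    nlinarith [mul_nonneg hε0.le hL0]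
  have htail := measureReal_sum_le_sum_integral_sub_le hind hmeas (a := 0) (b := 1)
    (fun i ω ↦ by rcases h01 i ω with h | h <;> simp [h]) (t := t) (by linarith)
  rw [Fintype.card_fin, hmean, sub_zero, one_pow, mul_one] at htail
  have hexp : exp (-2 * t ^ 2 / d) ≤ ((n : ℝ) ^ 3)⁻¹ := by
    rw [neg_mul, neg_div]
    refine exp_neg_le_inv_pow (by positivity) 3 ?_
    have ht2 : 9 * (d * log n) ≤ t ^ 2 := by
      rw [← hL2]
      nlinarith
    rw [le_div_iff₀ hd]
    push_cast
    nlinarith [mul_pos hd hlog]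
  rw [← ofReal_measureReal, ← ENNReal.ofReal_natCast, ← ENNReal.ofReal_pow (by positivity),
    ← ENNReal.ofReal_inv_of_pos (by positivity)]
  refine ENNReal.ofReal_le_ofReal (le_trans (le_of_eq ?_) (htail.trans hexp))
  congr 2
  ext ω
  rw [ht]
  ring_nf
end

section
/- Let ε be a real number with 0 < ε ≤ 1/2, let δ ∈ (0, 1), let r ≥ 1 be a natural number, and let q be a natural number with q ≥ (4/ε²) · (r + ln(1/δ)). Let X_1, …, X_q be i.i.d. Bernoulli(1/2 + ε) random variables. Then Pr[ Σ_{i=1}^q X_i < q/2 ] ≤ (1/100) · δ / 4^r. -/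
/-! The `X i` are independent and `[0, 1]`-valued with mean `1/2 + ε`, so by Hoeffding's
inequality their sum falls `q ε` below its mean `q (1/2 + ε)` with probability at most
`exp (-2 q ε²)`. The choice of `q` makes this at most `δ⁸ e^{-8r} ≤ δ / (100 · 4^r)`. -/

open MeasureTheory ProbabilityTheory
open scoped ENNReal NNReal

theorem measureReal_sum_le_sum_integral_sub_le_of_iIndepFun_of_mem_Icc {Ω ι : Type*}
    [MeasurableSpace Ω] {μ : Measure Ω} [IsProbabilityMeasure μ] [Fintype ι] {X : ι → Ω → ℝ}
    {a b : ℝ} (h_indep : iIndepFun X μ)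
    (hm : ∀ i, AEMeasurable (X i) μ) (hb : ∀ i, ∀ᵐ ω ∂μ, X i ω ∈ Set.Icc a b) {t : ℝ}
    (ht : 0 ≤ t) :
    μ.real {ω | ∑ i, X i ω ≤ ∑ i, μ[X i] - t}
      ≤ Real.exp (-2 * t ^ 2 / (Fintype.card ι * (b - a) ^ 2)) := by
  set Y : ι → Ω → ℝ := fun i ω ↦ μ[X i] - X i ω
  have hY_indep : iIndepFun Y μ :=
    h_indep.comp (fun i x ↦ ∫ ω, X i ω ∂μ - x) fun _ ↦ measurable_const.sub measurable_id
  have hY_subG : ∀ i ∈ Finset.univ, HasSubgaussianMGF (Y i) ((‖b - a‖₊ / 2) ^ 2) μ := by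
    intro i _
    convert (hasSubgaussianMGF_of_mem_Icc (hm i) (hb i)).neg using 1
    ext ω
    simp [Y]
  have h_tail := HasSubgaussianMGF.measure_sum_ge_le_of_iIndepFun hY_indep hY_subG ht
  have h_event : {ω | ∑ i, X i ω ≤ ∑ i, μ[X i] - t} = {ω | t ≤ ∑ i, Y i ω} := by
    ext ω
    simp only [Set.mem_ofPred_eq, Y, Finset.sum_sub_distrib]
    constructor <;> intro h <;> linarith
  have h_var : ((∑ _i : ι, (‖b - a‖₊ / 2) ^ 2 : ℝ≥0) : ℝ) = Fintype.card ι * (b - a) ^ 2 / 4 := by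
    push_cast
    simp only [Finset.sum_const, Finset.card_univ, nsmul_eq_mul, Real.norm_eq_abs, div_pow, sq_abs]
    ring
  rw [h_event]
  refine h_tail.trans_eq ?_
  rw [h_var, show 2 * (Fintype.card ι * (b - a) ^ 2 / 4) = Fintype.card ι * (b - a) ^ 2 / 2 by ring,
    div_div_eq_mul_div]
  congr 1
  ring

theorem integral_eq_measureReal_of_eq_zero_or_eq_one {Ω : Type*} [MeasurableSpace Ω]
    {μ : Measure Ω} {X : Ω → ℝ} (hX : Measurable X) (h01 : ∀ ω, X ω = 0 ∨ X ω = 1) :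
    μ[X] = μ.real {ω | X ω = 1} := by
  have h_ind : X = {ω | X ω = 1}.indicator 1 := by
    ext ω
    rcases h01 ω with h | h <;> simp [Set.indicator, h]
  conv_lhs => rw [h_ind]
  exact integral_indicator_one (hX (measurableSet_singleton 1))

theorem hundred_mul_four_pow_le_exp {r : ℕ} (hr : 1 ≤ r) : 100 * 4 ^ r ≤ Real.exp (8 * r) := by
  have h_exp_two : 5 ≤ Real.exp 2 := by
    have := Real.quadratic_le_exp_of_nonneg (x := 2) (by norm_num)
    norm_num at this
    linarith
  calc (100 : ℝ) * 4 ^ r ≤ 100 ^ r * 4 ^ r := by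
        gcongr
        exact le_self_pow₀ (by norm_num) (by omega)
    _ = 400 ^ r := by rw [← mul_pow]; norm_num
    _ ≤ (5 ^ 4) ^ r := by gcongr; norm_num
    _ ≤ (Real.exp 2 ^ 4) ^ r := by gcongr
    _ = Real.exp (8 * r) := by rw [← pow_mul, ← Real.exp_nat_mul]; push_cast; ring_nf

theorem exp_neg_two_mul_le_of_four_mul_add_log_le {δ x : ℝ} {r : ℕ} (hδ0 : 0 < δ) (hδ1 : δ ≤ 1)
    (hr : 1 ≤ r) (hx : 4 * (r + Real.log (1 / δ)) ≤ x) :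
    Real.exp (-2 * x) ≤ 1 / 100 * δ / 4 ^ r := by
  have h_log : Real.log δ ≤ 0 := Real.log_nonpos hδ0.le hδ1
  rw [one_div, Real.log_inv] at hx
  calc Real.exp (-2 * x) ≤ Real.exp (Real.log δ - 8 * r) := by
        gcongr
        linarith
    _ = δ / Real.exp (8 * r) := by rw [Real.exp_sub, Real.exp_log hδ0]
    _ ≤ δ / (100 * 4 ^ r) := by gcongr; exact hundred_mul_four_pow_le_exp hr
    _ = 1 / 100 * δ / 4 ^ r := by ring

theorem elimination_round_mis_vertex_removed_general
    (Ω : Type*) [MeasurableSpace Ω] (μ : Measure Ω) [IsProbabilityMeasure μ]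
    (ε : ℝ) (hε0 : 0 < ε)
    (δ : ℝ) (hδ0 : 0 < δ) (hδ1 : δ < 1)
    (r : ℕ) (hr : 1 ≤ r)
    (q : ℕ) (hq : (4 / ε ^ 2) * (r + Real.log (1 / δ)) ≤ (q : ℝ))
    (X : Fin q → Ω → ℝ)
    (hmeas : ∀ i, Measurable (X i))
    (h01 : ∀ i ω, X i ω = 0 ∨ X i ω = 1)
    (hBer : ∀ i, μ {ω | X i ω = 1} = ENNReal.ofReal (1 / 2 + ε))
    (hind : iIndepFun X μ) :
    μ {ω | ∑ i, X i ω < (q : ℝ) / 2}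
      ≤ ENNReal.ofReal ((1 / 100) * δ / 4 ^ r) := by
  have h_mean : ∀ i, μ[X i] = 1 / 2 + ε := fun i ↦ by
    rw [integral_eq_measureReal_of_eq_zero_or_eq_one (hmeas i) (h01 i), measureReal_def, hBer i,
      ENNReal.toReal_ofReal (by positivity)]
  have h_unit : ∀ i, ∀ᵐ ω ∂μ, X i ω ∈ Set.Icc (0 : ℝ) 1 := fun i ↦
    ae_of_all _ fun ω ↦ by rcases h01 i ω with h | h <;> simp [h]
  have h_q : 0 < (q : ℝ) := by
    refine lt_of_lt_of_le ?_ hq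
    have h_log : 0 < Real.log (1 / δ) := Real.log_pos (one_lt_one_div hδ0 hδ1)
    positivity
  have h_hoeffding := measureReal_sum_le_sum_integral_sub_le_of_iIndepFun_of_mem_Icc hind
    (fun i ↦ (hmeas i).aemeasurable) h_unit (t := q * ε) (by positivity)
  simp only [h_mean, Finset.sum_const, Finset.card_univ, Fintype.card_fin, nsmul_eq_mul,
    sub_zero, one_pow, mul_one] at h_hoeffding
  have h_exp : Real.exp (-2 * (q * ε) ^ 2 / q) ≤ 1 / 100 * δ / 4 ^ r := by
    rw [show -2 * (q * ε) ^ 2 / q = -2 * (q * ε ^ 2) by field_simp]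
    refine exp_neg_two_mul_le_of_four_mul_add_log_le hδ0 hδ1.le hr ?_
    rwa [div_mul_eq_mul_div, div_le_iff₀ (by positivity)] at hq
  rw [← ENNReal.ofReal_toReal (measure_ne_top μ _)]
  refine ENNReal.ofReal_le_ofReal ((measureReal_mono ?_).trans (h_hoeffding.trans h_exp))
  intro ω hω
  simp only [Set.mem_ofPred_eq] at hω ⊢
  linarith

/-- For `0 < ε ≤ 1/2`, `δ ∈ (0,1)`, `r ≥ 1`,
`q ≥ (4/ε²)·(r + ln(1/δ))`, and i.i.d. `Bernoulli(1/2 + ε)` random variables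
`X_1, …, X_q`, the probability that their sum is less than `q/2` is at most
`(1/100)·δ/4^r`. -/
theorem elimination_round_mis_vertex_removed
    (Ω : Type*) [MeasurableSpace Ω] (μ : Measure Ω) [IsProbabilityMeasure μ]
    (ε : ℝ) (hε0 : 0 < ε) (hε : ε ≤ 1 / 2)
    (δ : ℝ) (hδ0 : 0 < δ) (hδ1 : δ < 1)
    (r : ℕ) (hr : 1 ≤ r)
    (q : ℕ) (hq : (4 / ε ^ 2) * (r + Real.log (1 / δ)) ≤ (q : ℝ))
    (X : Fin q → Ω → ℝ)
    (hmeas : ∀ i, Measurable (X i))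
    (h01 : ∀ i ω, X i ω = 0 ∨ X i ω = 1)
    (hBer : ∀ i, μ {ω | X i ω = 1} = ENNReal.ofReal (1 / 2 + ε))
    (hind : iIndepFun X μ) :
    μ {ω | ∑ i, X i ω < (q : ℝ) / 2}
      ≤ ENNReal.ofReal ((1 / 100) * δ / 4 ^ r) :=
  elimination_round_mis_vertex_removed_general Ω μ ε hε0 δ hδ0 hδ1 r hr q hq X hmeas h01 hBer hind
end

section
/- Let n be a positive natural number, let α ∈ (0, 1) and δ ∈ (0, 1), and let B be a finite set with |B| ≤ n. Let r̃ ≥ 1 be a natural number with 4^{r̃} ≥ 4/α. Let (Z_{v,i}), for v ∈ B and i ∈ {1, …, r̃}, be a mutually independent family of {0,1}-valued random variables with Pr[Z_{v,i} = 1] ≤ δ/(100 · 4^i) for every v and i. Say that v ∈ B survives if Z_{v,i} = 1 for every i ∈ {1, …, r̃}. Then Pr[ |{v ∈ B : v survives}| > α·n/100 ] ≤ δ/4. -/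
open MeasureTheory ProbabilityTheory Finset
open scoped ENNReal Classical

/-- Each event may be replaced by a measurable hull of equal measure, so no measurability
is needed. -/
theorem mul_meas_card_filter_mem_ge_le_sum {Ω ι : Type*} [MeasurableSpace Ω] (μ : Measure Ω)
    (s : Finset ι) (A : ι → Set Ω) (c : ℝ≥0∞) :
    c * μ {ω | c ≤ #(s.filter fun v => ω ∈ A v)} ≤ ∑ v ∈ s, μ (A v) := by
  set f : Ω → ℝ≥0∞ := fun ω => ∑ v ∈ s, (toMeasurable μ (A v)).indicator 1 ω
  have hf : Measurable f :=
    Finset.measurable_sum _ fun v _ => measurable_one.indicator (measurableSet_toMeasurable μ _)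
  have hcount : ∀ ω, (#(s.filter fun v => ω ∈ A v) : ℝ≥0∞) ≤ f ω := fun ω => by
    rw [Finset.card_eq_sum_ones, Nat.cast_sum, Finset.sum_filter]
    refine Finset.sum_le_sum fun v _ => ?_
    split_ifs with hv
    · simp [subset_toMeasurable μ (A v) hv]
    · exact bot_le
  calc c * μ {ω | c ≤ #(s.filter fun v => ω ∈ A v)}
      ≤ c * μ {ω | c ≤ f ω} := by
        gcongr with ω
        exact hcount ω
    _ ≤ ∫⁻ ω, f ω ∂μ := mul_meas_ge_le_lintegral₀ hf.aemeasurable c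
    _ = ∑ v ∈ s, μ (A v) := by
        rw [lintegral_finsetSum _ fun v _ =>
          measurable_one.indicator (measurableSet_toMeasurable μ _)]
        refine Finset.sum_congr rfl fun v _ => ?_
        rw [lintegral_indicator_one (measurableSet_toMeasurable μ _), measure_toMeasurable]

theorem few_nonmis_vertices_survive_elimination_general
    (Ω : Type*) [MeasurableSpace Ω] (μ : Measure Ω)
    (ι : Type*) (B : Finset ι)
    (n : ℕ) (hn : 0 < n) (hB : B.card ≤ n)
    (α δ : ℝ) (hα0 : 0 < α) (hδ0 : 0 < δ)
    (rt : ℕ) (hrt : 1 ≤ rt) (hrt4 : 4 / α ≤ (4 : ℝ) ^ rt)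
    (Z : B → Fin rt → Ω → ℝ)
    (hprob : ∀ v i, μ {ω | Z v i ω = 1}
      ≤ ENNReal.ofReal (δ / (100 * 4 ^ ((i : ℕ) + 1)))) :
    μ {ω | α * n / 100
        < ((Finset.univ.filter (fun v : B => ∀ i, Z v i ω = 1)).card : ℝ)}
      ≤ ENNReal.ofReal (δ / 4) := by
  obtain ⟨k, rfl⟩ : ∃ k, rt = k + 1 := ⟨rt - 1, by omega⟩
  set c := ENNReal.ofReal (α * n / 100)
  have hc : c ≠ 0 := by simp [c]; positivity
  -- Surviving every round implies surviving the last one, which alone is unlikely enough.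
  have hlast : δ / (100 * 4 ^ (k + 1)) ≤ α * δ / 400 := by
    have h4 : 4 ≤ α * 4 ^ (k + 1) := by rwa [div_le_iff₀ hα0, mul_comm] at hrt4
    rw [div_le_div_iff₀ (by positivity) (by norm_num)]
    nlinarith
  have hsum : ∑ v : B, μ {ω | ∀ i, Z v i ω = 1} ≤ c * ENNReal.ofReal (δ / 4) :=
    calc ∑ v : B, μ {ω | ∀ i, Z v i ω = 1}
        ≤ ∑ _v : B, ENNReal.ofReal (α * δ / 400) := by
          gcongr with v
          exact (measure_mono fun ω (hω : ∀ i, Z v i ω = 1) => hω (Fin.last k)).trans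
            ((hprob v (Fin.last k)).trans (ENNReal.ofReal_le_ofReal hlast))
      _ ≤ n * ENNReal.ofReal (α * δ / 400) := by
          rw [Finset.sum_const, Finset.card_univ, Fintype.card_coe, nsmul_eq_mul]
          gcongr
      _ = c * ENNReal.ofReal (δ / 4) := by
          rw [← ENNReal.ofReal_natCast, ← ENNReal.ofReal_mul (by positivity),
            ← ENNReal.ofReal_mul (by positivity)]
          ring_nf
  refine (ENNReal.mul_le_mul_iff_right hc ENNReal.ofReal_ne_top).mp ?_
  refine le_trans ?_ ((mul_meas_card_filter_mem_ge_le_sum μ _ _ c).trans hsum)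
  gcongr with ω
  intro hω
  exact ENNReal.ofReal_le_of_le_toReal (by simpa using hω.le)

/-- Abstract form of part (i) of Lemma 4.3: `B` is a set of at most
`n` vertices, `Z v i` indicates that `v` survives round `i` (here round `i` is encoded
by the index `i : Fin r̃` and corresponds to round `i + 1 ∈ {1, …, r̃}`), each survival
indicator equals `1` with probability at most `δ/(100·4^{i+1})`, the whole family is
mutually independent, and `4^{r̃} ≥ 4/α`.  Then with probability at least `1 - δ/4`,
at most `α·n/100` elements of `B` survive all `r̃` rounds. -/
theorem few_nonmis_vertices_survive_elimination
    (Ω : Type*) [MeasurableSpace Ω] (μ : Measure Ω) [IsProbabilityMeasure μ]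
    (ι : Type*) (B : Finset ι)
    (n : ℕ) (hn : 0 < n) (hB : B.card ≤ n)
    (α δ : ℝ) (hα0 : 0 < α) (hα1 : α < 1) (hδ0 : 0 < δ) (hδ1 : δ < 1)
    (rt : ℕ) (hrt : 1 ≤ rt) (hrt4 : 4 / α ≤ (4 : ℝ) ^ rt)
    (Z : B → Fin rt → Ω → ℝ)
    (hmeas : ∀ v i, Measurable (Z v i))
    (h01 : ∀ v i ω, Z v i ω = 0 ∨ Z v i ω = 1)
    (hprob : ∀ v i, μ {ω | Z v i ω = 1}
      ≤ ENNReal.ofReal (δ / (100 * 4 ^ ((i : ℕ) + 1))))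
    (hind : iIndepFun (fun p : B × Fin rt => Z p.1 p.2) μ) :
    μ {ω | α * n / 100
        < ((Finset.univ.filter (fun v : B => ∀ i, Z v i ω = 1)).card : ℝ)}
      ≤ ENNReal.ofReal (δ / 4) :=
  few_nonmis_vertices_survive_elimination_general Ω μ ι B n hn hB α δ hα0 hδ0 rt hrt hrt4 Z hprob
end

section
/- Let n be a positive natural number, let ε > 0, let δ ∈ (0, 1), and let B be a finite set with |B| ≤ n. Let r̃ ≥ 1 be a natural number and let (Z_{v,i}), for v ∈ B and i ∈ {1, …, r̃}, be a mutually independent family of {0,1}-valued random variables with Pr[Z_{v,i} = 1] ≤ δ/(100 · 4^i) for every v and i. For i ∈ {1, …, r̃} set q_i = (4/ε²)·(i + ln(1/δ)), and define the random variable X = Σ_{v ∈ B} Σ_{i=1}^{r̃} q_i · 1[Z_{v,j} = 1 for all j ∈ {1, …, i}]. Then E[X] ≤ (δ·n/(25·ε²)) · (1 + ln(1/δ)). -/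
/-!
A vertex that survives rounds `1, …, i` in particular survives round `i`, so by linearity of
expectation each vertex contributes at most `(4δ/(100ε²)) · Σ_{i ≥ 1} (i + ln(1/δ))/4^i`, and
this series sums to `4/9 + ln(1/δ)/3 ≤ 1 + ln(1/δ)`.
-/

open MeasureTheory ProbabilityTheory Finset
open scoped ENNReal Classical

lemma sum_range_add_div_four_pow (L : ℝ) (m : ℕ) :
    ∑ i ∈ range m, ((i + 1 : ℝ) + L) / 4 ^ (i + 1)
      = 4 / 9 + L / 3 - ((m : ℝ) / 3 + 4 / 9 + L / 3) / 4 ^ m := by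
  induction m with
  | zero => simp
  | succ k ih =>
    rw [sum_range_succ, ih]
    push_cast
    field_simp
    ring

lemma sum_range_add_div_four_pow_le {L : ℝ} (hL : 0 ≤ L) (m : ℕ) :
    ∑ i ∈ range m, ((i + 1 : ℝ) + L) / 4 ^ (i + 1) ≤ 1 + L := by
  rw [sum_range_add_div_four_pow]
  have : 0 ≤ ((m : ℝ) / 3 + 4 / 9 + L / 3) / 4 ^ m := by positivity
  linarith

lemma mul_ite_one_zero_eq_indicator {Ω : Type*} (P : Ω → Prop) [DecidablePred P] (c : ℝ) :
    (fun ω => c * if P ω then 1 else 0) = {ω | P ω}.indicator fun _ => c := by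
  ext ω
  simp [Set.indicator_apply]

section Expectation

variable {Ω : Type*} [MeasurableSpace Ω] {μ : Measure Ω}

lemma integrable_mul_ite {P : Ω → Prop} [DecidablePred P] (hP : MeasurableSet {ω | P ω})
    (hfin : μ {ω | P ω} ≠ ∞) (c : ℝ) :
    Integrable (fun ω => c * if P ω then 1 else 0) μ := by
  rw [mul_ite_one_zero_eq_indicator, integrable_indicator_iff hP]
  exact integrableOn_const hfin

lemma integral_mul_ite_le {P : Ω → Prop} [DecidablePred P] (hP : MeasurableSet {ω | P ω})
    {c p : ℝ} (hc : 0 ≤ c) (hp : 0 ≤ p) (hPp : μ {ω | P ω} ≤ ENNReal.ofReal p) :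
    ∫ ω, c * (if P ω then 1 else 0) ∂μ ≤ c * p := by
  rw [mul_ite_one_zero_eq_indicator, integral_indicator_const c hP, smul_eq_mul, mul_comm,
    measureReal_def]
  exact mul_le_mul_of_nonneg_left (ENNReal.toReal_le_of_le_ofReal hp hPp) hc

lemma integral_sum_mul_ite_le {κ : Type*} (s : Finset κ) {P : κ → Ω → Prop}
    [∀ k, DecidablePred (P k)] (hP : ∀ k, MeasurableSet {ω | P k ω}) {c p : κ → ℝ}
    (hc : ∀ k, 0 ≤ c k) (hp : ∀ k, 0 ≤ p k) (hPp : ∀ k, μ {ω | P k ω} ≤ ENNReal.ofReal (p k)) :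
    ∫ ω, ∑ k ∈ s, c k * (if P k ω then 1 else 0) ∂μ ≤ ∑ k ∈ s, c k * p k := by
  have hfin (k : κ) : μ {ω | P k ω} ≠ ∞ := ne_top_of_le_ne_top ENNReal.ofReal_ne_top (hPp k)
  rw [integral_finsetSum s fun k _ => integrable_mul_ite (hP k) (hfin k) (c k)]
  exact sum_le_sum fun k _ => integral_mul_ite_le (hP k) (hc k) (hp k) (hPp k)

end Expectation

lemma sum_queries_mul_survival_bound_le (ε : ℝ) {δ L : ℝ} (hδ : 0 ≤ δ) (hL : 0 ≤ L) (rt : ℕ) :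
    ∑ i : Fin rt, (4 / ε ^ 2) * (((i : ℕ) + 1 : ℝ) + L) * (δ / (100 * 4 ^ ((i : ℕ) + 1)))
      ≤ (δ / (25 * ε ^ 2)) * (1 + L) := by
  calc ∑ i : Fin rt, (4 / ε ^ 2) * (((i : ℕ) + 1 : ℝ) + L) * (δ / (100 * 4 ^ ((i : ℕ) + 1)))
      = (δ / (25 * ε ^ 2)) * ∑ i ∈ range rt, ((i + 1 : ℝ) + L) / 4 ^ (i + 1) := by
        rw [Fin.sum_univ_eq_sum_range
          (fun i => (4 / ε ^ 2) * ((i + 1 : ℝ) + L) * (δ / (100 * 4 ^ (i + 1)))), mul_sum]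
        refine sum_congr rfl fun i _ => ?_
        field_simp
        ring
    _ ≤ (δ / (25 * ε ^ 2)) * (1 + L) :=
        mul_le_mul_of_nonneg_left (sum_range_add_div_four_pow_le hL rt) (by positivity)

theorem expected_queries_on_nonmis_vertices_general
    (Ω : Type*) [MeasurableSpace Ω] (μ : Measure Ω)
    (ι : Type*) (B : Finset ι)
    (n : ℕ) (hB : B.card ≤ n)
    (ε : ℝ)
    (δ : ℝ) (hδ0 : 0 < δ) (hδ1 : δ < 1)
    (rt : ℕ)
    (Z : B → Fin rt → Ω → ℝ)
    (hmeas : ∀ v i, Measurable (Z v i))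
    (hprob : ∀ v i, μ {ω | Z v i ω = 1}
      ≤ ENNReal.ofReal (δ / (100 * 4 ^ ((i : ℕ) + 1)))) :
    ∫ ω, (∑ v : B, ∑ i : Fin rt,
        (4 / ε ^ 2) * (((i : ℕ) + 1 : ℝ) + Real.log (1 / δ)) *
          (if ∀ j : Fin rt, j ≤ i → Z v j ω = 1 then (1 : ℝ) else 0)) ∂μ
      ≤ (δ * n / (25 * ε ^ 2)) * (1 + Real.log (1 / δ)) := by
  set L := Real.log (1 / δ)
  have hL : 0 ≤ L := Real.log_nonneg (by rw [le_div_iff₀ hδ0]; linarith)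
  have hsurvive (v : B) (i : Fin rt) : μ {ω | ∀ j : Fin rt, j ≤ i → Z v j ω = 1}
      ≤ ENNReal.ofReal (δ / (100 * 4 ^ ((i : ℕ) + 1))) :=
    (hprob v i).trans' (measure_mono fun _ hω => hω i le_rfl)
  have hexp := integral_sum_mul_ite_le (μ := μ) (univ : Finset (B × Fin rt))
    (P := fun k ω => ∀ j : Fin rt, j ≤ k.2 → Z k.1 j ω = 1)
    (c := fun k => (4 / ε ^ 2) * (((k.2 : ℕ) + 1 : ℝ) + L))
    (p := fun k => δ / (100 * 4 ^ ((k.2 : ℕ) + 1)))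
    (fun _ => by measurability) (fun _ => by positivity) (fun _ => by positivity)
    fun k => hsurvive k.1 k.2
  simp only [Fintype.sum_prod_type] at hexp
  calc _ ≤ _ := hexp
    _ = B.card * ∑ i : Fin rt,
          (4 / ε ^ 2) * (((i : ℕ) + 1 : ℝ) + L) * (δ / (100 * 4 ^ ((i : ℕ) + 1))) := by
        simp
    _ ≤ n * ((δ / (25 * ε ^ 2)) * (1 + L)) :=
        mul_le_mul (by exact_mod_cast hB) (sum_queries_mul_survival_bound_le ε hδ0.le hL rt)
          (sum_nonneg fun i _ => by positivity) (Nat.cast_nonneg n)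
    _ = (δ * n / (25 * ε ^ 2)) * (1 + L) := by ring

/-- Abstract form of the non-MIS part of Lemma 4.3(iii): `B` is a set
of at most `n` vertices, `Z v i` indicates that `v` survives round `i` (the index
`i : Fin r̃` stands for round `i + 1 ∈ {1, …, r̃}`), each survival indicator equals `1`
with probability at most `δ/(100·4^{i+1})`, and the whole family is mutually
independent.  With `q_i = (4/ε²)·(i + ln(1/δ))` queries per vertex surviving through
round `i`, the expected total number of queries
`X = Σ_{v ∈ B} Σ_{i=1}^{r̃} q_i · 1[v survives rounds 1, …, i]` is at most
`(δ·n/(25·ε²))·(1 + ln(1/δ))`. -/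
theorem expected_queries_on_nonmis_vertices
    (Ω : Type*) [MeasurableSpace Ω] (μ : Measure Ω) [IsProbabilityMeasure μ]
    (ι : Type*) (B : Finset ι)
    (n : ℕ) (hn : 0 < n) (hB : B.card ≤ n)
    (ε : ℝ) (hε0 : 0 < ε)
    (δ : ℝ) (hδ0 : 0 < δ) (hδ1 : δ < 1)
    (rt : ℕ) (hrt : 1 ≤ rt)
    (Z : B → Fin rt → Ω → ℝ)
    (hmeas : ∀ v i, Measurable (Z v i))
    (h01 : ∀ v i ω, Z v i ω = 0 ∨ Z v i ω = 1)
    (hprob : ∀ v i, μ {ω | Z v i ω = 1}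
      ≤ ENNReal.ofReal (δ / (100 * 4 ^ ((i : ℕ) + 1))))
    (hind : iIndepFun (fun p : B × Fin rt => Z p.1 p.2) μ) :
    ∫ ω, (∑ v : B, ∑ i : Fin rt,
        (4 / ε ^ 2) * (((i : ℕ) + 1 : ℝ) + Real.log (1 / δ)) *
          (if ∀ j : Fin rt, j ≤ i → Z v j ω = 1 then (1 : ℝ) else 0)) ∂μ
      ≤ (δ * n / (25 * ε ^ 2)) * (1 + Real.log (1 / δ)) :=
  expected_queries_on_nonmis_vertices_general Ω μ ι B n hB ε δ hδ0 hδ1 rt Z hmeas hprob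
end
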